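/- arXiv:2603.10721 — 5 statements merged into one kernel-verified Lean document; each statement's English description precedes it below -/
import Mathlib

section
/- Let d ≥ 1, let α ∈ [0, 1/2) and ε ∈ (0, 1). Let X̃ and X* be finite nonempty subsets of ℝ^d, let T = X̃ ∩ X*, and assume |T| ≥ (1 − α)·max(|X̃|, |X*|). Let m ∈ ℝ^d be a geometric median of T and let c* ∈ ℝ^d be a geometric median of X*. Let C be a finite nonempty set of points of ℝ^d containing some point q with ‖q − m‖₂ ≤ α·ε·Cost(T, m)/|T|. For each c ∈ C let N(c) ⊆ X̃ be a set of ⌈(1 − α)|X̃|⌉ points of X̃ closest to c (i.e., ‖x − c‖₂ ≤ ‖y − c‖₂ for every x ∈ N(c) and y ∈ X̃ \ N(c)), and let ĉ ∈ C be a minimizer over c ∈ C of Cost(N(c), c). Then Cost(X*, ĉ) ≤ (1 + (6α − 4α² + εα)/((1 − α)(1 − 2α))) · Cost(X*, c*). -/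
/-
If the candidate `q` is close to the median `m` of the common part `T`, its `(1 - α)`-trimmed
cost is at most `(1 + αε) Cost(T, m)`, so the selected centre `ĉ` has an equally cheap trimmed
cluster `N(ĉ)`. Since `N(ĉ)` and `T` are both `(1 - α)`-fractions of `X̃`, they share at least
`(1 - 2α)|X̃|` points; averaging the triangle inequality over these bounds the distances from `ĉ`
to `m` and to `c*`. Exchanging the at most `2α|X̃|` points outside `T ∩ N(ĉ)` bounds `Cost(T, ĉ)`,
and the at most `α|X*|` points of `X* \ T` are paid for by moving them from `c*` to `ĉ`.
-/

open Finset
open scoped Classical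

noncomputable def Cost {d : ℕ} (P : Finset (EuclideanSpace ℝ (Fin d)))
    (c : EuclideanSpace ℝ (Fin d)) : ℝ :=
  ∑ p ∈ P, ‖p - c‖

section Counting

variable {β : Type*}

lemma sum_le_sum_of_card_eq_of_forall_le {A B : Finset β} {f : β → ℝ} (hcard : #A = #B)
    (h : ∀ a ∈ A, ∀ b ∈ B, f a ≤ f b) : ∑ a ∈ A, f a ≤ ∑ b ∈ B, f b := by
  rcases B.eq_empty_or_nonempty with rfl | hB
  · simp [card_eq_zero.mp hcard]
  obtain ⟨b₀, hb₀, hmin⟩ := B.exists_min_image f hB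
  calc ∑ a ∈ A, f a ≤ #A • f b₀ := sum_le_card_nsmul A f _ fun a ha => h a ha b₀ hb₀
    _ = #B • f b₀ := by rw [hcard]
    _ ≤ ∑ b ∈ B, f b := card_nsmul_le_sum B f _ hmin

lemma sum_le_sum_of_forall_le_sdiff [DecidableEq β] {X N S : Finset β} {f : β → ℝ} (hS : S ⊆ X)
    (hcard : #S = #N) (hN : ∀ x ∈ N, ∀ y ∈ X \ N, f x ≤ f y) :
    ∑ x ∈ N, f x ≤ ∑ x ∈ S, f x := by
  rw [← sum_inter_add_sum_sdiff N S, ← sum_inter_add_sum_sdiff S N, inter_comm S N]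
  refine add_le_add_right (sum_le_sum_of_card_eq_of_forall_le ?_ fun a ha b hb => ?_) _
  · have hNS := card_inter_add_card_sdiff N S
    have hSN := card_inter_add_card_sdiff S N
    rw [inter_comm S N] at hSN
    omega
  · exact hN a (mem_sdiff.mp ha).1 b (mem_sdiff.mpr ⟨hS (mem_sdiff.mp hb).1, (mem_sdiff.mp hb).2⟩)

lemma card_sdiff_le_of_subset [DecidableEq β] {X t : Finset β} {α : ℝ} (ht : t ⊆ X)
    (htc : (1 - α) * #X ≤ #t) : (#(X \ t) : ℝ) ≤ α * #X := by
  have h : (#(X \ t) + #t : ℝ) = #X := by exact_mod_cast card_sdiff_add_card_eq_card ht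
  linarith

lemma card_sdiff_add_card_sdiff_le [DecidableEq β] {X s t : Finset β} {α : ℝ} (hs : s ⊆ X)
    (ht : t ⊆ X) (hsc : (1 - α) * #X ≤ #s) (htc : (1 - α) * #X ≤ #t) :
    (#(s \ t) + #(t \ s) : ℝ) ≤ 2 * α * #X := by
  have hst : (#(s \ t) + #t : ℝ) ≤ #X := by
    exact_mod_cast (card_sdiff_add_card s t).trans_le (card_le_card (union_subset hs ht))
  have hts : (#(t \ s) + #s : ℝ) ≤ #X := by
    exact_mod_cast (card_sdiff_add_card t s).trans_le (card_le_card (union_subset ht hs))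
  linarith

lemma le_card_inter [DecidableEq β] {X s t : Finset β} {α : ℝ} (hs : s ⊆ X) (ht : t ⊆ X)
    (hsc : (1 - α) * #X ≤ #s) (htc : (1 - α) * #X ≤ #t) :
    (1 - 2 * α) * #X ≤ #(s ∩ t) := by
  have h : (#s + #t : ℝ) ≤ #X + #(s ∩ t) := by
    exact_mod_cast (card_union_add_card_inter s t).symm.trans_le
      (Nat.add_le_add_right (card_le_card (union_subset hs ht)) _)
  linarith

end Counting

section Cost

variable {d : ℕ}

lemma cost_nonneg (P : Finset (EuclideanSpace ℝ (Fin d))) (c : EuclideanSpace ℝ (Fin d)) :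
    0 ≤ Cost P c :=
  sum_nonneg fun _ _ => norm_nonneg _

lemma cost_mono {S P : Finset (EuclideanSpace ℝ (Fin d))} (h : S ⊆ P)
    (c : EuclideanSpace ℝ (Fin d)) : Cost S c ≤ Cost P c :=
  sum_le_sum_of_subset_of_nonneg h fun _ _ _ => norm_nonneg _

lemma cost_inter_add_cost_sdiff (P Q : Finset (EuclideanSpace ℝ (Fin d)))
    (c : EuclideanSpace ℝ (Fin d)) : Cost (P ∩ Q) c + Cost (P \ Q) c = Cost P c :=
  sum_inter_add_sum_sdiff P Q _

lemma cost_le_cost_add_card_mul (P : Finset (EuclideanSpace ℝ (Fin d)))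
    (c c' : EuclideanSpace ℝ (Fin d)) : Cost P c ≤ Cost P c' + #P * ‖c - c'‖ :=
  calc Cost P c ≤ ∑ p ∈ P, (‖p - c'‖ + ‖c - c'‖) := sum_le_sum fun p _ =>
        (norm_sub_le_norm_sub_add_norm_sub p c' c).trans_eq (by rw [norm_sub_rev c' c])
    _ = Cost P c' + #P * ‖c - c'‖ := by rw [sum_add_distrib, sum_const, nsmul_eq_mul]; rfl

lemma card_mul_norm_sub_le (P : Finset (EuclideanSpace ℝ (Fin d)))
    (a b : EuclideanSpace ℝ (Fin d)) : #P * ‖a - b‖ ≤ Cost P a + Cost P b :=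
  calc (#P : ℝ) * ‖a - b‖ = ∑ _p ∈ P, ‖a - b‖ := by rw [sum_const, nsmul_eq_mul]
    _ ≤ ∑ p ∈ P, (‖p - a‖ + ‖p - b‖) := sum_le_sum fun p _ =>
        (norm_sub_le_norm_sub_add_norm_sub a p b).trans_eq (by rw [norm_sub_rev a p])
    _ = Cost P a + Cost P b := sum_add_distrib

lemma mul_norm_sub_le_cost_add_cost {X N T : Finset (EuclideanSpace ℝ (Fin d))} {α : ℝ}
    (hN : N ⊆ X) (hT : T ⊆ X) (hNc : (1 - α) * #X ≤ #N) (hTc : (1 - α) * #X ≤ #T)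
    (c a : EuclideanSpace ℝ (Fin d)) : (1 - 2 * α) * #X * ‖c - a‖ ≤ Cost N c + Cost T a :=
  calc (1 - 2 * α) * #X * ‖c - a‖ ≤ #(N ∩ T) * ‖c - a‖ :=
        mul_le_mul_of_nonneg_right (le_card_inter hN hT hNc hTc) (norm_nonneg _)
    _ ≤ Cost (N ∩ T) c + Cost (N ∩ T) a := card_mul_norm_sub_le _ c a
    _ ≤ Cost N c + Cost T a :=
        add_le_add (cost_mono inter_subset_left c) (cost_mono inter_subset_right a)

lemma cost_le_of_subset {T X : Finset (EuclideanSpace ℝ (Fin d))} (hT : T ⊆ X)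
    (c c' : EuclideanSpace ℝ (Fin d)) :
    Cost X c ≤ Cost T c + (Cost X c' - Cost T c') + #(X \ T) * ‖c - c'‖ := by
  have hc := cost_inter_add_cost_sdiff X T c
  have hc' := cost_inter_add_cost_sdiff X T c'
  rw [inter_eq_right.mpr hT] at hc hc'
  linarith [cost_le_cost_add_card_mul (X \ T) c c']

lemma cost_inter_le_of_cost_le {P Q : Finset (EuclideanSpace ℝ (Fin d))}
    {c c' : EuclideanSpace ℝ (Fin d)} (h : Cost P c ≤ Cost P c') :
    Cost (P ∩ Q) c ≤ Cost (P ∩ Q) c' + #(P \ Q) * ‖c - c'‖ := by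
  have hc := cost_inter_add_cost_sdiff P Q c
  have hc' := cost_inter_add_cost_sdiff P Q c'
  have hsave := cost_le_cost_add_card_mul (P \ Q) c' c
  rw [norm_sub_rev] at hsave
  linarith

lemma cost_le_of_cost_le_cost {T N : Finset (EuclideanSpace ℝ (Fin d))}
    {c q m : EuclideanSpace ℝ (Fin d)} (h : Cost N c ≤ Cost N q) :
    Cost T c ≤ Cost T m + #N * ‖q - m‖ + (#(N \ T) + #(T \ N)) * ‖c - m‖ := by
  have hNT := cost_inter_le_of_cost_le (Q := T) h
  have hshift := cost_le_cost_add_card_mul (N ∩ T) q m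
  have hout := cost_le_cost_add_card_mul (T \ N) c m
  have htri : ‖c - q‖ ≤ ‖c - m‖ + ‖q - m‖ :=
    (norm_sub_le_norm_sub_add_norm_sub c m q).trans_eq (by rw [norm_sub_rev m q])
  have htri' := mul_le_mul_of_nonneg_left htri (Nat.cast_nonneg (α := ℝ) #(N \ T))
  have hc := cost_inter_add_cost_sdiff T N c
  have hm := cost_inter_add_cost_sdiff T N m
  have hcard : (#(N ∩ T) : ℝ) + #(N \ T) = #N := by exact_mod_cast card_inter_add_card_sdiff N T
  rw [inter_comm] at hc hm
  linear_combination hNT + hshift + hout + htri' + ‖q - m‖ * hcard - hc + hm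

lemma cost_le_of_cost_le_cost_nearest {X T N N' : Finset (EuclideanSpace ℝ (Fin d))}
    {c q m : EuclideanSpace ℝ (Fin d)} (hT : T ⊆ X) (hN : N ⊆ X) (hcard : #N' = #N)
    (hNT : #N ≤ #T) (hN' : ∀ x ∈ N', ∀ y ∈ X \ N', ‖x - q‖ ≤ ‖y - q‖)
    (h : Cost N c ≤ Cost N' q) :
    Cost N c ≤ Cost T m + #N * ‖q - m‖ ∧
      Cost T c ≤ Cost T m + #N * ‖q - m‖ + (#(N \ T) + #(T \ N)) * ‖c - m‖ := by
  obtain ⟨S, hST, hS⟩ := exists_subset_card_eq (hcard ▸ hNT)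
  refine ⟨?_, cost_le_of_cost_le_cost (h.trans (sum_le_sum_of_forall_le_sdiff hN hcard.symm hN'))⟩
  calc Cost N c ≤ Cost N' q := h
    _ ≤ Cost S q := sum_le_sum_of_forall_le_sdiff (hST.trans hT) hS hN'
    _ ≤ Cost S m + #S * ‖q - m‖ := cost_le_cost_add_card_mul S q m
    _ ≤ Cost T m + #N * ‖q - m‖ := by rw [hS, hcard]; linarith [cost_mono hST m]

end Cost

lemma le_one_add_div_mul_of_le {α ε n ns u v A Bm B O K : ℝ} (hα0 : 0 ≤ α) (hα : α < 1 / 2)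
    (hε : 0 ≤ ε) (hv0 : 0 ≤ v) (hn : (1 - α) * ns ≤ n) (hA : A ≤ (1 + α * ε) * Bm)
    (hBm : Bm ≤ B) (hB : B ≤ O)
    (hu : (1 - 2 * α) * n * u ≤ A + Bm) (hv : (1 - 2 * α) * n * v ≤ A + B)
    (hK : K ≤ (1 + α * ε) * Bm + 2 * α * (n * u) + (O - B) + α * (ns * v)) :
    K ≤ (1 + (6 * α - 4 * α ^ 2 + ε * α) / ((1 - α) * (1 - 2 * α))) * O := by
  have hD : 0 < (1 - α) * (1 - 2 * α) := mul_pos (by linarith) (by linarith)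
  have hαε : 0 ≤ α * ε := mul_nonneg hα0 hε
  have hc : 0 ≤ 6 * α - 4 * α ^ 2 + ε * α := by nlinarith
  rw [one_add_div hD.ne', div_mul_eq_mul_div, le_div_iff₀ hD]
  -- after clearing the denominator, the coefficient of `B` collected below is `6α - 4α² + εα`
  have h1 := mul_le_mul_of_nonneg_left hu
    (mul_nonneg (by linarith) (by linarith) : 0 ≤ 2 * α * (1 - α))
  have h2 := mul_le_mul_of_nonneg_left hv hα0
  have h3 := mul_le_mul_of_nonneg_left hn
    (mul_nonneg (mul_nonneg hα0 (by linarith)) hv0 : 0 ≤ α * (1 - 2 * α) * v)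
  have h4 := mul_le_mul_of_nonneg_left hK hD.le
  have h5 := mul_le_mul_of_nonneg_left hA (by nlinarith : 0 ≤ 2 * α * (1 - α) + α)
  have h6 := mul_le_mul_of_nonneg_left hBm
    (by nlinarith : 0 ≤ (1 - α) * (1 - 2 * α) * (1 + α * ε) + 2 * α * (1 - α) * (2 + α * ε)
      + α * (1 + α * ε))
  have h7 := mul_le_mul_of_nonneg_left hB hc
  linarith

theorem stmt0_general (d : ℕ) (α ε : ℝ)
    (hα0 : 0 ≤ α) (hα : α < 1/2) (hε0 : 0 < ε)
    (Xt Xs : Finset (EuclideanSpace ℝ (Fin d)))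
    (T : Finset (EuclideanSpace ℝ (Fin d))) (hTdef : T = Xt ∩ Xs)
    (hTsize : (1 - α) * max (Xt.card : ℝ) (Xs.card : ℝ) ≤ (T.card : ℝ))
    (m cstar : EuclideanSpace ℝ (Fin d))
    (hm : ∀ y, Cost T m ≤ Cost T y)
    (C : Finset (EuclideanSpace ℝ (Fin d)))
    (q : EuclideanSpace ℝ (Fin d)) (hqC : q ∈ C)
    (hq : ‖q - m‖ ≤ α * ε * Cost T m / (T.card : ℝ))
    (N : EuclideanSpace ℝ (Fin d) → Finset (EuclideanSpace ℝ (Fin d)))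
    (hNsub : ∀ c ∈ C, N c ⊆ Xt)
    (hNcard : ∀ c ∈ C, (N c).card = ⌈(1 - α) * (Xt.card : ℝ)⌉₊)
    (hNnear : ∀ c ∈ C, ∀ x ∈ N c, ∀ y ∈ Xt \ N c, ‖x - c‖ ≤ ‖y - c‖)
    (chat : EuclideanSpace ℝ (Fin d)) (hchatC : chat ∈ C)
    (hchat : ∀ c ∈ C, Cost (N chat) chat ≤ Cost (N c) c) :
    Cost Xs chat ≤
      (1 + (6 * α - 4 * α ^ 2 + ε * α) / ((1 - α) * (1 - 2 * α))) * Cost Xs cstar := by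
  obtain ⟨hTXt, hTXs⟩ : T ⊆ Xt ∧ T ⊆ Xs := hTdef ▸ ⟨inter_subset_left, inter_subset_right⟩
  obtain ⟨hTt, hTs⟩ : (1 - α) * #Xt ≤ #T ∧ (1 - α) * #Xs ≤ #T :=
    max_le_iff.mp ((mul_max_of_nonneg _ _ (by linarith)).symm.trans_le hTsize)
  have hNhatXt := hNsub chat hchatC
  have hNhat : (1 - α) * #Xt ≤ #(N chat) := hNcard chat hchatC ▸ Nat.le_ceil _
  have hNT : #(N chat) ≤ #T := hNcard chat hchatC ▸ Nat.ceil_le.mpr hTt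
  -- `T = ∅` is allowed: then `hq` reads `‖q - m‖ ≤ 0` because `x / 0 = 0`
  have hqm : #(N chat) * ‖q - m‖ ≤ α * ε * Cost T m :=
    calc (#(N chat) : ℝ) * ‖q - m‖ ≤ ‖q - m‖ * #T := by
          rw [mul_comm]; exact mul_le_mul_of_nonneg_left (mod_cast hNT) (norm_nonneg _)
      _ ≤ α * ε * Cost T m :=
          mul_le_of_le_div₀ (mul_nonneg (mul_nonneg hα0 hε0.le) (cost_nonneg T m))
            (Nat.cast_nonneg _) hq
  obtain ⟨hcost, hTchat⟩ := cost_le_of_cost_le_cost_nearest (m := m) hTXt hNhatXt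
    ((hNcard q hqC).trans (hNcard chat hchatC).symm) hNT (hNnear q hqC) (hchat q hqC)
  refine le_one_add_div_mul_of_le hα0 hα hε0.le (norm_nonneg _)
    (hTs.trans (mod_cast card_le_card hTXt)) (by linarith) (hm cstar) (cost_mono hTXs cstar)
    (mul_norm_sub_le_cost_add_cost hNhatXt hTXt hNhat hTt chat m)
    (mul_norm_sub_le_cost_add_cost hNhatXt hTXt hNhat hTt chat cstar) ?_
  have hsd := mul_le_mul_of_nonneg_right
    (card_sdiff_add_card_sdiff_le hNhatXt hTXt hNhat hTt) (norm_nonneg (chat - m))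
  have hout := mul_le_mul_of_nonneg_right (card_sdiff_le_of_subset hTXs hTs)
    (norm_nonneg (chat - cstar))
  linarith [cost_le_of_subset hTXs chat cstar]

theorem stmt0 (d : ℕ) (hd : 1 ≤ d) (α ε : ℝ)
    (hα0 : 0 ≤ α) (hα : α < 1/2) (hε0 : 0 < ε) (hε1 : ε < 1)
    (Xt Xs : Finset (EuclideanSpace ℝ (Fin d)))
    (hXt : Xt.Nonempty) (hXs : Xs.Nonempty)
    (T : Finset (EuclideanSpace ℝ (Fin d))) (hTdef : T = Xt ∩ Xs)
    (hTsize : (1 - α) * max (Xt.card : ℝ) (Xs.card : ℝ) ≤ (T.card : ℝ))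
    (m cstar : EuclideanSpace ℝ (Fin d))
    (hm : ∀ y, Cost T m ≤ Cost T y)
    (hcstar : ∀ y, Cost Xs cstar ≤ Cost Xs y)
    (C : Finset (EuclideanSpace ℝ (Fin d))) (hC : C.Nonempty)
    (q : EuclideanSpace ℝ (Fin d)) (hqC : q ∈ C)
    (hq : ‖q - m‖ ≤ α * ε * Cost T m / (T.card : ℝ))
    (N : EuclideanSpace ℝ (Fin d) → Finset (EuclideanSpace ℝ (Fin d)))
    (hNsub : ∀ c ∈ C, N c ⊆ Xt)
    (hNcard : ∀ c ∈ C, (N c).card = ⌈(1 - α) * (Xt.card : ℝ)⌉₊)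
    (hNnear : ∀ c ∈ C, ∀ x ∈ N c, ∀ y ∈ Xt \ N c, ‖x - c‖ ≤ ‖y - c‖)
    (chat : EuclideanSpace ℝ (Fin d)) (hchatC : chat ∈ C)
    (hchat : ∀ c ∈ C, Cost (N chat) chat ≤ Cost (N c) c) :
    Cost Xs chat ≤
      (1 + (6 * α - 4 * α ^ 2 + ε * α) / ((1 - α) * (1 - 2 * α))) * Cost Xs cstar :=
  stmt0_general d α ε hα0 hα hε0 Xt Xs T hTdef hTsize m cstar hm C q hqC hq N hNsub hNcard hNnear
    chat hchatC hchat
end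

section
/- Let d ≥ 1, let α ∈ [0, 1/2) and ε ∈ (0, 1). Let X̃ and X* be finite nonempty subsets of ℝ^d, let T = X̃ ∩ X*, and assume |T| ≥ (1 − α)·max(|X̃|, |X*|). Let m ∈ ℝ^d be a geometric median of T and let c* ∈ ℝ^d be a geometric median of X*. Let C be a finite nonempty set of points of ℝ^d containing some point q with ‖q − m‖₂ ≤ α·ε·Cost(T, m)/|T|. For each c ∈ C let N(c) ⊆ X̃ be a set of ⌈(1 − α)|X̃|⌉ points of X̃ closest to c, and let ĉ ∈ C minimize Cost(N(c), c) over c ∈ C. Then ‖ĉ − m‖₂ ≤ (2 + αε)·Cost(X*, c*) / ((1 − 2α)·|X̃|). -/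
open Finset
open scoped Classical

theorem stmt1 (d : ℕ) (hd : 1 ≤ d) (α ε : ℝ)
    (hα0 : 0 ≤ α) (hα : α < 1/2) (hε0 : 0 < ε) (hε1 : ε < 1)
    (Xt Xs : Finset (EuclideanSpace ℝ (Fin d)))
    (hXt : Xt.Nonempty) (hXs : Xs.Nonempty)
    (T : Finset (EuclideanSpace ℝ (Fin d))) (hTdef : T = Xt ∩ Xs)
    (hTsize : (1 - α) * max (Xt.card : ℝ) (Xs.card : ℝ) ≤ (T.card : ℝ))
    (m cstar : EuclideanSpace ℝ (Fin d))
    (hm : ∀ y, Cost T m ≤ Cost T y)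
    (hcstar : ∀ y, Cost Xs cstar ≤ Cost Xs y)
    (C : Finset (EuclideanSpace ℝ (Fin d))) (hC : C.Nonempty)
    (q : EuclideanSpace ℝ (Fin d)) (hqC : q ∈ C)
    (hq : ‖q - m‖ ≤ α * ε * Cost T m / (T.card : ℝ))
    (N : EuclideanSpace ℝ (Fin d) → Finset (EuclideanSpace ℝ (Fin d)))
    (hNsub : ∀ c ∈ C, N c ⊆ Xt)
    (hNcard : ∀ c ∈ C, (N c).card = ⌈(1 - α) * (Xt.card : ℝ)⌉₊)
    (hNnear : ∀ c ∈ C, ∀ x ∈ N c, ∀ y ∈ Xt \ N c, ‖x - c‖ ≤ ‖y - c‖)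
    (chat : EuclideanSpace ℝ (Fin d)) (hchatC : chat ∈ C)
    (hchat : ∀ c ∈ C, Cost (N chat) chat ≤ Cost (N c) c) :
    ‖chat - m‖ ≤ (2 + α * ε) * Cost Xs cstar / ((1 - 2 * α) * (Xt.card : ℝ)) := by

  classical
  set k := ⌈(1 - α) * (Xt.card : ℝ)⌉₊ with hk
  have hXt0 : (0:ℝ) < Xt.card := by exact_mod_cast Finset.card_pos.mpr hXt
  have h1α : (0:ℝ) < 1 - α := by linarith
  have hTge : (1 - α) * (Xt.card : ℝ) ≤ T.card :=
    le_trans (by apply mul_le_mul_of_nonneg_left (le_max_left _ _) h1α.le) hTsize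
  have hT0 : (0:ℝ) < T.card := lt_of_lt_of_le (by positivity) hTge
  have hTX : T ⊆ Xt := hTdef ▸ Finset.inter_subset_left
  have hkT : k ≤ T.card := Nat.ceil_le.mpr hTge
  have cost_mono : ∀ (P Q : Finset (EuclideanSpace ℝ (Fin d))) c, P ⊆ Q →
      Cost P c ≤ Cost Q c := fun P Q c h =>
    Finset.sum_le_sum_of_subset_of_nonneg h (fun p _ _ => norm_nonneg _)
  -- Step 1 : Cost (N q) q ≤ Cost T q
  have hNqT : Cost (N q) q ≤ Cost T q := by
    have hcardNq : (N q).card = k := hNcard q hqC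
    have hcards : (N q \ T).card ≤ (T \ N q).card := by
      have h1 : (N q \ T).card + (N q ∩ T).card = (N q).card :=
        Finset.card_sdiff_add_card_inter _ _
      have h2 : (T \ N q).card + (T ∩ N q).card = T.card :=
        Finset.card_sdiff_add_card_inter _ _
      have h3 : (N q ∩ T).card = (T ∩ N q).card := by rw [Finset.inter_comm]
      omega
    have key : ∑ x ∈ N q \ T, ‖x - q‖ ≤ ∑ y ∈ T \ N q, ‖y - q‖ := by
      rcases (N q \ T).eq_empty_or_nonempty with he | hne
      · rw [he, Finset.sum_empty]
        exact Finset.sum_nonneg fun y _ => norm_nonneg _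
      · have hne2 : (T \ N q).Nonempty := by
          rw [← Finset.card_pos] at hne ⊢
          omega
        set μ := (T \ N q).inf' hne2 (fun y => ‖y - q‖) with hμ
        have hxμ : ∀ x ∈ N q \ T, ‖x - q‖ ≤ μ := by
          intro x hx
          apply Finset.le_inf'
          intro y hy
          have hyX : y ∈ Xt \ N q := by
            rw [Finset.mem_sdiff] at hy ⊢
            exact ⟨hTX hy.1, hy.2⟩
          exact hNnear q hqC x (Finset.mem_sdiff.mp hx).1 y hyX
        obtain ⟨y0, hy0, hy0eq⟩ := Finset.exists_mem_eq_inf' hne2 (fun y => ‖y - q‖)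
        have hμ0 : 0 ≤ μ := by rw [hμ, hy0eq]; exact norm_nonneg _
        calc ∑ x ∈ N q \ T, ‖x - q‖ ≤ ∑ _x ∈ N q \ T, μ := Finset.sum_le_sum hxμ
          _ = ((N q \ T).card : ℝ) * μ := by rw [Finset.sum_const, nsmul_eq_mul]
          _ ≤ ((T \ N q).card : ℝ) * μ := by
              apply mul_le_mul_of_nonneg_right _ hμ0
              exact_mod_cast hcards
          _ = ∑ _y ∈ T \ N q, μ := by rw [Finset.sum_const, nsmul_eq_mul]
          _ ≤ ∑ y ∈ T \ N q, ‖y - q‖ := Finset.sum_le_sum fun y hy => Finset.inf'_le _ hy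
    have e1 : Cost (N q) q = ∑ x ∈ N q ∩ T, ‖x - q‖ + ∑ x ∈ N q \ T, ‖x - q‖ :=
      (Finset.sum_inter_add_sum_sdiff (N q) T _).symm
    have e2 : Cost T q = ∑ x ∈ T ∩ N q, ‖x - q‖ + ∑ x ∈ T \ N q, ‖x - q‖ :=
      (Finset.sum_inter_add_sum_sdiff T (N q) _).symm
    have e3 : ∑ x ∈ N q ∩ T, ‖x - q‖ = ∑ x ∈ T ∩ N q, ‖x - q‖ := by
      rw [Finset.inter_comm]
    linarith
  -- Step 2 : Cost T q ≤ Cost T m + |T| * ‖q - m‖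
  have h2 : Cost T q ≤ Cost T m + (T.card : ℝ) * ‖q - m‖ := by
    calc Cost T q ≤ ∑ p ∈ T, (‖p - m‖ + ‖q - m‖) := by
          apply Finset.sum_le_sum
          intro p _
          have hpq : p - q = (p - m) - (q - m) := by abel
          rw [hpq]
          exact norm_sub_le _ _
      _ = Cost T m + (T.card : ℝ) * ‖q - m‖ := by
          rw [Finset.sum_add_distrib, Finset.sum_const, nsmul_eq_mul]; rfl
  -- Step 3 : |T| * ‖q - m‖ ≤ αε Cost T m
  have h3 : (T.card : ℝ) * ‖q - m‖ ≤ α * ε * Cost T m := by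
    calc (T.card : ℝ) * ‖q - m‖ ≤ (T.card : ℝ) * (α * ε * Cost T m / (T.card : ℝ)) :=
          mul_le_mul_of_nonneg_left hq hT0.le
      _ = α * ε * Cost T m := by field_simp
  have hA : Cost (N chat) chat ≤ (1 + α * ε) * Cost T m := by
    have h1 : Cost (N chat) chat ≤ Cost (N q) q := hchat q hqC
    nlinarith [hNqT]
  -- Cost T m ≤ Cost Xs cstar
  have hTm : Cost T m ≤ Cost Xs cstar := by
    have h1 : Cost T m ≤ Cost T cstar := hm cstar
    have h2' : Cost T cstar ≤ Cost Xs cstar :=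
      cost_mono _ _ _ (hTdef ▸ Finset.inter_subset_right)
    linarith
  -- S = N chat ∩ T
  set S := N chat ∩ T with hSdef
  have hScard : (1 - 2 * α) * (Xt.card : ℝ) ≤ S.card := by
    have hu : (N chat ∪ T).card ≤ Xt.card :=
      Finset.card_le_card (Finset.union_subset (hNsub chat hchatC) hTX)
    have hie : S.card + (N chat ∪ T).card = (N chat).card + T.card :=
      Finset.card_inter_add_card_union _ _
    have hkge : (1 - α) * (Xt.card : ℝ) ≤ k := Nat.le_ceil _
    have hNc : (N chat).card = k := hNcard chat hchatC
    have hieR : (S.card : ℝ) + ((N chat ∪ T).card : ℝ) = ((N chat).card : ℝ) + T.card := by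
      exact_mod_cast hie
    have huR : ((N chat ∪ T).card : ℝ) ≤ Xt.card := by exact_mod_cast hu
    have hNcR : ((N chat).card : ℝ) = k := by exact_mod_cast hNc
    linarith
  have hS0 : (0:ℝ) < S.card := lt_of_lt_of_le (mul_pos (by linarith) hXt0) hScard
  -- triangle sum
  have htri : (S.card : ℝ) * ‖chat - m‖ ≤ Cost S m + Cost S chat := by
    have hpt : ∀ x ∈ S, ‖chat - m‖ ≤ ‖x - m‖ + ‖x - chat‖ := by
      intro x _
      have h1 : chat - m = (x - m) - (x - chat) := by abel
      rw [h1]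
      exact norm_sub_le _ _
    calc (S.card : ℝ) * ‖chat - m‖ = ∑ _x ∈ S, ‖chat - m‖ := by
          rw [Finset.sum_const, nsmul_eq_mul]
      _ ≤ ∑ x ∈ S, (‖x - m‖ + ‖x - chat‖) := Finset.sum_le_sum hpt
      _ = Cost S m + Cost S chat := Finset.sum_add_distrib
  have hfinal : (S.card : ℝ) * ‖chat - m‖ ≤ (2 + α * ε) * Cost Xs cstar := by
    have h1 : Cost S chat ≤ Cost (N chat) chat := cost_mono _ _ _ Finset.inter_subset_left
    have h2' : Cost S m ≤ Cost T m := cost_mono _ _ _ Finset.inter_subset_right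
    have h4 : (2 + α * ε) * Cost T m ≤ (2 + α * ε) * Cost Xs cstar :=
      mul_le_mul_of_nonneg_left hTm (by positivity)
    linarith
  have hpos : (0:ℝ) < (1 - 2 * α) * (Xt.card : ℝ) := mul_pos (by linarith) hXt0
  rw [le_div_iff₀ hpos]
  calc ‖chat - m‖ * ((1 - 2 * α) * (Xt.card : ℝ)) ≤ ‖chat - m‖ * S.card :=
        mul_le_mul_of_nonneg_left hScard (norm_nonneg _)
    _ = (S.card : ℝ) * ‖chat - m‖ := mul_comm _ _
    _ ≤ (2 + α * ε) * Cost Xs cstar := hfinal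
end

section
/- Let d ≥ 1, let α ∈ [0, 1/2) and ε ∈ (0, 1). Let X̃ and X* be finite nonempty subsets of ℝ^d, let T = X̃ ∩ X*, and assume |T| ≥ (1 − α)·max(|X̃|, |X*|). Let m ∈ ℝ^d be a geometric median of T and let c* ∈ ℝ^d be a geometric median of X*. Let C be a finite nonempty set of points of ℝ^d containing some point q with ‖q − m‖₂ ≤ α·ε·Cost(T, m)/|T|. For each c ∈ C let N(c) ⊆ X̃ be a set of ⌈(1 − α)|X̃|⌉ points of X̃ closest to c, and let ĉ ∈ C minimize Cost(N(c), c) over c ∈ C. Then Cost(T, ĉ) − Cost(T, c*) ≤ (4α + εα)·Cost(X*, c*) / (1 − 2α). -/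
open Finset
open scoped Classical

lemma Cost_nonneg {d : ℕ} (P : Finset (EuclideanSpace ℝ (Fin d)))
    (c : EuclideanSpace ℝ (Fin d)) : 0 ≤ Cost P c :=
  Finset.sum_nonneg fun _ _ => norm_nonneg _

lemma Cost_mono {d : ℕ} {P Q : Finset (EuclideanSpace ℝ (Fin d))}
    (h : P ⊆ Q) (c : EuclideanSpace ℝ (Fin d)) : Cost P c ≤ Cost Q c :=
  Finset.sum_le_sum_of_subset_of_nonneg h fun _ _ _ => norm_nonneg _

lemma Cost_shift {d : ℕ} (P : Finset (EuclideanSpace ℝ (Fin d)))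
    (c c' : EuclideanSpace ℝ (Fin d)) :
    Cost P c ≤ Cost P c' + (P.card : ℝ) * ‖c' - c‖ := by
  unfold Cost
  calc ∑ p ∈ P, ‖p - c‖ ≤ ∑ p ∈ P, (‖p - c'‖ + ‖c' - c‖) := by
        refine Finset.sum_le_sum fun p _ => ?_
        have h : p - c = (p - c') + (c' - c) := by abel
        rw [h]; exact norm_add_le _ _
    _ = (∑ p ∈ P, ‖p - c'‖) + (P.card : ℝ) * ‖c' - c‖ := by
        rw [Finset.sum_add_distrib, Finset.sum_const, nsmul_eq_mul]

lemma Cost_pair {d : ℕ} (P : Finset (EuclideanSpace ℝ (Fin d)))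
    (c c' : EuclideanSpace ℝ (Fin d)) :
    (P.card : ℝ) * ‖c - c'‖ ≤ Cost P c + Cost P c' := by
  unfold Cost
  calc (P.card : ℝ) * ‖c - c'‖ = ∑ _p ∈ P, ‖c - c'‖ := by
        rw [Finset.sum_const, nsmul_eq_mul]
    _ ≤ ∑ p ∈ P, (‖p - c‖ + ‖p - c'‖) := by
        refine Finset.sum_le_sum fun p _ => ?_
        have h : c - c' = (p - c') - (p - c) := by abel
        rw [h]
        exact (norm_sub_le _ _).trans (by rw [add_comm])
    _ = _ := Finset.sum_add_distrib

/-- choose a subset of given size all of whose elements have `f`-value below the rest -/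
lemma exists_low_subset {X : Type*} [DecidableEq X] (f : X → ℝ) :
    ∀ (g : ℕ) (E : Finset X), g ≤ E.card →
      ∃ G, G ⊆ E ∧ G.card = g ∧ ∀ a ∈ G, ∀ b ∈ E \ G, f a ≤ f b := by
  intro g
  induction g with
  | zero => exact fun E _ => ⟨∅, Finset.empty_subset _, Finset.card_empty, by simp⟩
  | succ g ih =>
    intro E hg
    obtain ⟨G, hGE, hGcard, hGmin⟩ := ih E (le_trans (Nat.le_succ g) hg)
    have hne : (E \ G).Nonempty := by
      rw [← Finset.card_pos, Finset.card_sdiff_of_subset hGE, hGcard]; omega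
    obtain ⟨b₀, hb₀, hb₀min⟩ := (E \ G).exists_min_image f hne
    refine ⟨insert b₀ G, ?_, ?_, ?_⟩
    · exact Finset.insert_subset (Finset.mem_sdiff.mp hb₀).1 hGE
    · rw [Finset.card_insert_of_notMem (Finset.mem_sdiff.mp hb₀).2, hGcard]
    · intro a ha b hb
      have hbE : b ∈ E \ G := by
        rcases Finset.mem_sdiff.mp hb with ⟨hbE, hbni⟩
        exact Finset.mem_sdiff.mpr ⟨hbE, fun h => hbni (Finset.mem_insert_of_mem h)⟩
      rcases Finset.mem_insert.mp ha with rfl | haG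
      · exact hb₀min b hbE
      · exact hGmin a haG b hbE

/-- choose a subset of given size whose average `f`-value is at most the overall average -/
lemma exists_cheap_subset {X : Type*} [DecidableEq X] (f : X → ℝ)
    (hf : ∀ x, 0 ≤ f x) (E : Finset X) (g : ℕ) (hg : g ≤ E.card) :
    ∃ G, G ⊆ E ∧ G.card = g ∧
      (E.card : ℝ) * (∑ p ∈ G, f p) ≤ (g : ℝ) * (∑ p ∈ E, f p) := by
  obtain ⟨G, hGE, hGcard, hGmin⟩ := exists_low_subset f g E hg
  refine ⟨G, hGE, hGcard, ?_⟩
  have key : ∑ a ∈ G, ∑ _b ∈ E \ G, f a ≤ ∑ _a ∈ G, ∑ b ∈ E \ G, f b :=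
    Finset.sum_le_sum fun a ha => Finset.sum_le_sum fun b hb => hGmin a ha b hb
  have hL : ∑ a ∈ G, ∑ _b ∈ E \ G, f a = ((E \ G).card : ℝ) * ∑ a ∈ G, f a := by
    rw [Finset.mul_sum]
    exact Finset.sum_congr rfl fun a _ => by rw [Finset.sum_const, nsmul_eq_mul]
  have hR : ∑ _a ∈ G, ∑ b ∈ E \ G, f b = (G.card : ℝ) * ∑ b ∈ E \ G, f b := by
    rw [Finset.sum_const, nsmul_eq_mul]
  rw [hL, hR] at key
  have hGr : (G.card : ℝ) = (g : ℝ) := by exact_mod_cast congrArg Nat.cast hGcard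
  have hsplit : (∑ p ∈ E \ G, f p) + (∑ p ∈ G, f p) = ∑ p ∈ E, f p :=
    Finset.sum_sdiff hGE
  have hcardsplit : ((E \ G).card : ℝ) = (E.card : ℝ) - (G.card : ℝ) := by
    rw [Finset.card_sdiff_of_subset hGE, Nat.cast_sub (Finset.card_le_card hGE)]
  have h6 : (g : ℝ) * (∑ p ∈ E \ G, f p) + (g : ℝ) * (∑ p ∈ G, f p)
      = (g : ℝ) * (∑ p ∈ E, f p) := by rw [← mul_add, hsplit]
  have h7 : (E.card : ℝ) * (∑ p ∈ G, f p)
      = ((E \ G).card : ℝ) * (∑ p ∈ G, f p) + (g : ℝ) * (∑ p ∈ G, f p) := by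
    rw [hcardsplit, hGr]; ring
  rw [hGr] at key
  linarith [key, h6, h7]

/-- sums compare when every element of the first set is below every element of the second -/
lemma sum_le_sum_dominate {X : Type*} [DecidableEq X] (f : X → ℝ) (E₁ E₂ : Finset X)
    (hc : E₁.card = E₂.card) (hd : ∀ a ∈ E₁, ∀ b ∈ E₂, f a ≤ f b) :
    ∑ p ∈ E₁, f p ≤ ∑ p ∈ E₂, f p := by
  rcases E₂.eq_empty_or_nonempty with h | h
  · subst h
    have : E₁ = ∅ := Finset.card_eq_zero.mp (by simpa using hc)
    simp [this]
  · obtain ⟨b₀, hb₀, hb₀min⟩ := E₂.exists_min_image f h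
    calc ∑ p ∈ E₁, f p ≤ ∑ _p ∈ E₁, f b₀ :=
          Finset.sum_le_sum fun a ha => hd a ha b₀ hb₀
      _ = E₂.card • f b₀ := by rw [Finset.sum_const, hc]
      _ ≤ ∑ p ∈ E₂, f p := Finset.card_nsmul_le_sum E₂ f (f b₀) fun b hb => hb₀min b hb

theorem stmt6 (d : ℕ) (hd : 1 ≤ d) (α ε : ℝ)
    (hα0 : 0 ≤ α) (hα : α < 1/2) (hε0 : 0 < ε) (hε1 : ε < 1)
    (Xt Xs : Finset (EuclideanSpace ℝ (Fin d)))
    (hXt : Xt.Nonempty) (hXs : Xs.Nonempty)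
    (T : Finset (EuclideanSpace ℝ (Fin d))) (hTdef : T = Xt ∩ Xs)
    (hTsize : (1 - α) * max (Xt.card : ℝ) (Xs.card : ℝ) ≤ (T.card : ℝ))
    (m cstar : EuclideanSpace ℝ (Fin d))
    (hm : ∀ y, Cost T m ≤ Cost T y)
    (hcstar : ∀ y, Cost Xs cstar ≤ Cost Xs y)
    (C : Finset (EuclideanSpace ℝ (Fin d))) (hC : C.Nonempty)
    (q : EuclideanSpace ℝ (Fin d)) (hqC : q ∈ C)
    (hq : ‖q - m‖ ≤ α * ε * Cost T m / (T.card : ℝ))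
    (N : EuclideanSpace ℝ (Fin d) → Finset (EuclideanSpace ℝ (Fin d)))
    (hNsub : ∀ c ∈ C, N c ⊆ Xt)
    (hNcard : ∀ c ∈ C, (N c).card = ⌈(1 - α) * (Xt.card : ℝ)⌉₊)
    (hNnear : ∀ c ∈ C, ∀ x ∈ N c, ∀ y ∈ Xt \ N c, ‖x - c‖ ≤ ‖y - c‖)
    (chat : EuclideanSpace ℝ (Fin d)) (hchatC : chat ∈ C)
    (hchat : ∀ c ∈ C, Cost (N chat) chat ≤ Cost (N c) c) :
    Cost T chat - Cost T cstar ≤ (4 * α + ε * α) * Cost Xs cstar / (1 - 2 * α) := by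
  classical
  set Nc := N chat with hNcdef
  set I : Finset (EuclideanSpace ℝ (Fin d)) := T ∩ Nc with hIdef
  set E : Finset (EuclideanSpace ℝ (Fin d)) := T \ Nc with hEdef
  set J : Finset (EuclideanSpace ℝ (Fin d)) := Nc \ T with hJdef
  have hTXt : T ⊆ Xt := by rw [hTdef]; exact Finset.inter_subset_left
  have hTXs : T ⊆ Xs := by rw [hTdef]; exact Finset.inter_subset_right
  have hNcXt : Nc ⊆ Xt := hNsub chat hchatC
  -- cardinal facts (natural numbers)
  have hνeq : Nc.card = ⌈(1 - α) * (Xt.card : ℝ)⌉₊ := hNcard chat hchatC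
  have h1 : (1 - α) * (Xt.card : ℝ) ≤ (T.card : ℝ) := by
    refine le_trans ?_ hTsize
    have h1α : (0:ℝ) ≤ 1 - α := by linarith
    exact mul_le_mul_of_nonneg_left (le_max_left _ _) h1α
  have hνt : Nc.card ≤ T.card := by
    rw [hνeq]; exact Nat.ceil_le.mpr h1
  have hνn : (1 - α) * (Xt.card : ℝ) ≤ (Nc.card : ℝ) := by
    rw [hνeq]; exact Nat.le_ceil _
  have hInter : T.card + Nc.card ≤ Xt.card + I.card := by
    have h := Finset.card_union_add_card_inter T Nc
    have hsub : (T ∪ Nc).card ≤ Xt.card :=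
      Finset.card_le_card (Finset.union_subset hTXt hNcXt)
    rw [← hIdef] at h
    omega
  have hEI : E.card + I.card = T.card := by
    rw [hEdef, hIdef]; exact Finset.card_sdiff_add_card_inter T Nc
  have hJI : J.card + I.card = Nc.card := by
    rw [hJdef, hIdef, Finset.inter_comm]
    exact Finset.card_sdiff_add_card_inter Nc T
  have hgk : J.card ≤ E.card := by omega
  -- real abbreviations
  set M : ℝ := Cost T m with hMdef
  set xx : ℝ := ‖chat - m‖ with hxxdef
  set a' : ℝ := Cost I chat with ha'def
  set sm : ℝ := Cost I m with hsmdef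
  set w : ℝ := Cost E m with hwdef
  set P : ℝ := α * ε * M with hPdef
  have hMnonneg : (0:ℝ) ≤ M := Cost_nonneg _ _
  have hPnonneg : (0:ℝ) ≤ P := by
    rw [hPdef]; positivity
  have hxnonneg : (0:ℝ) ≤ xx := norm_nonneg _
  have hwnonneg : (0:ℝ) ≤ w := Cost_nonneg _ _
  have hsmnonneg : (0:ℝ) ≤ sm := Cost_nonneg _ _
  have hn1 : (1:ℝ) ≤ (Xt.card : ℝ) := by
    have := Finset.card_pos.mpr hXt
    exact_mod_cast this
  have htpos : (0:ℝ) < (T.card : ℝ) := by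
    have h1α : (0:ℝ) ≤ 1 - α := by linarith
    have h' := mul_le_mul_of_nonneg_left hn1 h1α
    linarith [h', h1]
  -- bound on ‖q - m‖ scaled by |T|
  have hqm : (T.card : ℝ) * ‖q - m‖ ≤ P := by
    have h := mul_le_mul_of_nonneg_left hq (le_of_lt htpos)
    calc (T.card : ℝ) * ‖q - m‖ ≤ (T.card : ℝ) * (α * ε * M / (T.card : ℝ)) := h
      _ = P := by
        rw [hPdef]; field_simp
  -- splitting costs
  have hsplitT : ∀ c : EuclideanSpace ℝ (Fin d), Cost T c = Cost I c + Cost E c := by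
    intro c
    rw [hIdef, hEdef]
    exact (Finset.sum_inter_add_sum_sdiff T Nc _).symm
  have hsplitN : ∀ c : EuclideanSpace ℝ (Fin d), Cost Nc c = Cost I c + Cost J c := by
    intro c
    rw [hIdef, hJdef, Finset.inter_comm]
    exact (Finset.sum_inter_add_sum_sdiff Nc T _).symm
  have hMsplit : M = sm + w := hsplitT m
  -- optimality of N q among subsets of Xt of the same size
  have hopt : ∀ S, S ⊆ Xt → S.card = (N q).card → Cost (N q) q ≤ Cost S q := by
    intro S hS hcard
    have hkey : Cost (N q \ S) q ≤ Cost (S \ N q) q := by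
      apply sum_le_sum_dominate
      · have h1 := Finset.card_sdiff_add_card_inter (N q) S
        have h2 := Finset.card_sdiff_add_card_inter S (N q)
        rw [Finset.inter_comm] at h2
        omega
      · intro a ha b hb
        exact hNnear q hqC a (Finset.mem_sdiff.mp ha).1 b
          (Finset.mem_sdiff.mpr ⟨hS (Finset.mem_sdiff.mp hb).1, (Finset.mem_sdiff.mp hb).2⟩)
    have e1 : Cost (N q) q = Cost (N q ∩ S) q + Cost (N q \ S) q :=
      (Finset.sum_inter_add_sum_sdiff _ _ _).symm
    have e2 : Cost S q = Cost (S ∩ N q) q + Cost (S \ N q) q :=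
      (Finset.sum_inter_add_sum_sdiff _ _ _).symm
    rw [Finset.inter_comm] at e2
    linarith [e1, e2, hkey]
  have hA_le_Q : Cost Nc chat ≤ Cost (N q) q := hchat q hqC
  have hNqcard : (N q).card = Nc.card := by
    rw [hνeq, hNcard q hqC]
  -- (H6a) a' ≤ sm + g·x + P via the competitor S = Nc
  have hH6a : a' ≤ sm + (J.card : ℝ) * xx + P := by
    have h0 : Cost Nc chat ≤ Cost Nc q := hA_le_Q.trans (hopt Nc hNcXt hNqcard.symm)
    have hIq : Cost I q ≤ sm + (I.card : ℝ) * ‖m - q‖ := Cost_shift I q m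
    have hJq : Cost J q ≤ Cost J chat + (J.card : ℝ) * ‖chat - q‖ := Cost_shift J q chat
    have hcq : ‖chat - q‖ ≤ xx + ‖m - q‖ := by
      rw [hxxdef]
      have h : chat - q = (chat - m) + (m - q) := by abel
      rw [h]; exact norm_add_le _ _
    have hmq : ‖m - q‖ = ‖q - m‖ := norm_sub_rev m q
    have hνt' : ((I.card : ℝ) + (J.card : ℝ)) * ‖q - m‖ ≤ P := by
      have hle : ((I.card : ℝ) + (J.card : ℝ)) ≤ (T.card : ℝ) := by
        have ha : (Nc.card : ℝ) ≤ (T.card : ℝ) := by exact_mod_cast hνt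
        have hb : (J.card : ℝ) + (I.card : ℝ) = (Nc.card : ℝ) := by exact_mod_cast hJI
        linarith
      calc ((I.card : ℝ) + (J.card : ℝ)) * ‖q - m‖ ≤ (T.card : ℝ) * ‖q - m‖ :=
            mul_le_mul_of_nonneg_right hle (norm_nonneg _)
        _ ≤ P := hqm
    have hsc : Cost Nc chat = a' + Cost J chat := hsplitN chat
    have hsq : Cost Nc q = Cost I q + Cost J q := hsplitN q
    have hJc : (J.card : ℝ) * ‖chat - q‖ ≤ (J.card : ℝ) * (xx + ‖m - q‖) :=
      mul_le_mul_of_nonneg_left hcq (by positivity)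
    rw [hmq] at hIq hJc
    linarith [h0, hIq, hJq, hJc, hνt', hsc, hsq]
  -- (H6b) a' ≤ sm + CG + P via the competitor S = I ∪ G
  obtain ⟨G, hGE, hGcard, hGcheap⟩ :=
    exists_cheap_subset (fun p => ‖p - m‖) (fun p => norm_nonneg _) E J.card hgk
  set CG : ℝ := Cost G m with hCGdef
  have hCGnonneg : (0:ℝ) ≤ CG := Cost_nonneg _ _
  have hkCG : (E.card : ℝ) * CG ≤ (J.card : ℝ) * w := hGcheap
  have hH6b : a' ≤ sm + CG + P := by
    have hdisj : Disjoint I G := by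
      have hIsub : I ⊆ Nc := by rw [hIdef]; exact Finset.inter_subset_right
      exact Finset.disjoint_left.mpr fun p hpI hpG =>
        (Finset.mem_sdiff.mp (hGE hpG)).2 (hIsub hpI)
    have hScard : (I ∪ G).card = (N q).card := by
      rw [Finset.card_union_of_disjoint hdisj, hGcard, hNqcard]
      omega
    have hSsub : I ∪ G ⊆ Xt := by
      refine Finset.union_subset ?_ ?_
      · exact fun p hp => hTXt (Finset.mem_of_mem_inter_left hp)
      · exact fun p hp => hTXt (Finset.mem_sdiff.mp (hGE hp)).1
    have h0 : Cost Nc chat ≤ Cost (I ∪ G) q := hA_le_Q.trans (hopt _ hSsub hScard)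
    have hSsplit : Cost (I ∪ G) q = Cost I q + Cost G q := Finset.sum_union hdisj
    have hIq : Cost I q ≤ sm + (I.card : ℝ) * ‖m - q‖ := Cost_shift I q m
    have hGq : Cost G q ≤ CG + (G.card : ℝ) * ‖m - q‖ := Cost_shift G q m
    have hmq : ‖m - q‖ = ‖q - m‖ := norm_sub_rev m q
    have hνt' : ((I.card : ℝ) + (G.card : ℝ)) * ‖q - m‖ ≤ P := by
      have hle : ((I.card : ℝ) + (G.card : ℝ)) ≤ (T.card : ℝ) := by
        have ha : (Nc.card : ℝ) ≤ (T.card : ℝ) := by exact_mod_cast hνt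
        have hb : (J.card : ℝ) + (I.card : ℝ) = (Nc.card : ℝ) := by exact_mod_cast hJI
        have hc : (G.card : ℝ) = (J.card : ℝ) := by exact_mod_cast congrArg Nat.cast hGcard
        linarith
      calc ((I.card : ℝ) + (G.card : ℝ)) * ‖q - m‖ ≤ (T.card : ℝ) * ‖q - m‖ :=
            mul_le_mul_of_nonneg_right hle (norm_nonneg _)
        _ ≤ P := hqm
    have hsc : Cost Nc chat = a' + Cost J chat := hsplitN chat
    have hJchat : (0:ℝ) ≤ Cost J chat := Cost_nonneg _ _
    rw [hmq] at hIq hGq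
    linarith [h0, hSsplit, hIq, hGq, hνt', hsc, hJchat]
  -- CG ≤ w
  have hCGw : CG ≤ w := by
    rcases Nat.eq_zero_or_pos E.card with h | h
    · have hE0 : E = ∅ := Finset.card_eq_zero.mp h
      have hG0 : G = ∅ := Finset.subset_empty.mp (hE0 ▸ hGE)
      have h0 : Cost (∅ : Finset (EuclideanSpace ℝ (Fin d))) m = 0 := Finset.sum_empty
      rw [hCGdef, hG0, h0]
      exact hwnonneg
    · have hkr : (0:ℝ) < (E.card : ℝ) := by exact_mod_cast h
      have hgler : (J.card : ℝ) ≤ (E.card : ℝ) := by exact_mod_cast hgk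
      by_contra hcon
      push_neg at hcon
      have h2 : (J.card : ℝ) * w ≤ (E.card : ℝ) * w :=
        mul_le_mul_of_nonneg_right hgler hwnonneg
      have h3 := mul_lt_mul_of_pos_left hcon hkr
      linarith [hkCG, h2, h3]
  -- (H7) i·x ≤ a' + sm
  have hH7 : (I.card : ℝ) * xx ≤ a' + sm := by
    have h := Cost_pair I chat m
    rw [← hxxdef] at h
    exact h
  -- (H1) cost decomposition at chat
  have hH1 : Cost T chat ≤ a' + w + (E.card : ℝ) * xx := by
    have h1' := hsplitT chat
    have h2 : Cost E chat ≤ w + (E.card : ℝ) * ‖m - chat‖ := Cost_shift E chat m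
    have h3 : ‖m - chat‖ = xx := by rw [hxxdef]; exact norm_sub_rev m chat
    rw [h3] at h2
    linarith
  have hH2 : M ≤ Cost T cstar := hm cstar
  have hH4 : M ≤ Cost Xs cstar := hH2.trans (Cost_mono hTXs cstar)
  -- counting inequality: (1 - 2α)(g + k) ≤ 2α·i
  have hir : (T.card : ℝ) + (Nc.card : ℝ) - (Xt.card : ℝ) ≤ (I.card : ℝ) := by
    have h : ((T.card + Nc.card : ℕ) : ℝ) ≤ ((Xt.card + I.card : ℕ) : ℝ) := by
      exact_mod_cast hInter
    push_cast at h
    linarith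
  have hsum2 : (2 - 2*α) * (Xt.card : ℝ) ≤ (T.card : ℝ) + (Nc.card : ℝ) := by
    linarith [h1, hνn]
  have hgkr : (J.card : ℝ) + (E.card : ℝ)
      = (T.card : ℝ) + (Nc.card : ℝ) - 2 * (I.card : ℝ) := by
    have e1 : ((E.card + I.card : ℕ) : ℝ) = ((T.card : ℕ) : ℝ) := by exact_mod_cast congrArg Nat.cast hEI
    have e2 : ((J.card + I.card : ℕ) : ℝ) = ((Nc.card : ℕ) : ℝ) := by exact_mod_cast congrArg Nat.cast hJI
    push_cast at e1 e2
    linarith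
  have hcount : (1 - 2*α) * ((J.card : ℝ) + (E.card : ℝ)) ≤ 2 * α * (I.card : ℝ) := by
    rw [hgkr]
    have h2a : (0:ℝ) ≤ 2 - 2*α := by linarith
    have hmul := mul_le_mul_of_nonneg_left hir h2a
    linarith [hmul, hsum2]
  -- final assembly
  have h12 : (0:ℝ) < 1 - 2*α := by linarith
  have e1 : Cost T chat - Cost T cstar ≤ ((J.card : ℝ) + (E.card : ℝ)) * xx + P := by
    linarith [hH1, hH2, hH6a, hMsplit]
  have e2 : (I.card : ℝ) * xx ≤ 2 * M + P := by
    linarith [hH7, hH6b, hCGw, hMsplit, hwnonneg]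
  have e3 : (1 - 2*α) * (((J.card : ℝ) + (E.card : ℝ)) * xx) ≤ 2 * α * ((I.card : ℝ) * xx) := by
    linarith [mul_le_mul_of_nonneg_right hcount hxnonneg]
  have e4 : 2 * α * ((I.card : ℝ) * xx) ≤ 2 * α * (2 * M + P) :=
    mul_le_mul_of_nonneg_left e2 (by linarith)
  have e5 : (1 - 2*α) * (Cost T chat - Cost T cstar) ≤ (4 * α + ε * α) * Cost Xs cstar := by
    have step : (1 - 2*α) * (Cost T chat - Cost T cstar) ≤ (4 * α + ε * α) * M := by
      have h := mul_le_mul_of_nonneg_left e1 (le_of_lt h12)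
      rw [hPdef] at h e4
      linarith [h, e3, e4]
    have step2 : (4 * α + ε * α) * M ≤ (4 * α + ε * α) * Cost Xs cstar := by
      apply mul_le_mul_of_nonneg_left hH4
      linarith [mul_nonneg (le_of_lt hε0) hα0]
    linarith
  exact (le_div_iff₀ h12).mpr (by linarith [e5])
end

section
/- Let d ≥ 1, let λ ∈ (0, 1), and let X ⊆ ℝ^d be a finite set of n points partitioned as X = X₁ ∪ X₂ with X₁ ∩ X₂ = ∅ and X₁ nonempty. If |X₁| ≥ (1 − λ)·n, then ‖Cen(X) − Cen(X₁)‖₂² ≤ (λ / ((1 − λ)·n)) · Cost₂(X, Cen(X)). -/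
open Finset
open scoped Classical

noncomputable def Cost2 {d : ℕ} (P : Finset (EuclideanSpace ℝ (Fin d)))
    (c : EuclideanSpace ℝ (Fin d)) : ℝ :=
  ∑ p ∈ P, ‖p - c‖ ^ 2

noncomputable def Cen {d : ℕ} (P : Finset (EuclideanSpace ℝ (Fin d))) :
    EuclideanSpace ℝ (Fin d) :=
  ((P.card : ℝ)⁻¹) • ∑ p ∈ P, p

/-!
Put `c = Cen X`, `m = |X₁|`, `k = |X₂|`. The deviations `p - c` sum to `0` over `X`, and to
`m • (Cen X₁ - c)` over `X₁`, hence to its negative over `X₂`. Cauchy–Schwarz on each part gives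
`m ‖Cen X₁ - c‖² ≤ Cost₂(X₁, c)` and `m² ‖Cen X₁ - c‖² ≤ k Cost₂(X₂, c)`; adding `k` times the
first to the second yields `m n ‖Cen X₁ - c‖² ≤ k Cost₂(X, c)`. Finally `k ≤ λ n` and
`m ≥ (1 - λ) n`.
-/

theorem norm_sum_sq_le_card_mul_sum_norm_sq {ι E : Type*} [SeminormedAddCommGroup E]
    (s : Finset ι) (f : ι → E) :
    ‖∑ i ∈ s, f i‖ ^ 2 ≤ s.card * ∑ i ∈ s, ‖f i‖ ^ 2 :=
  calc ‖∑ i ∈ s, f i‖ ^ 2 ≤ (∑ i ∈ s, ‖f i‖) ^ 2 := by gcongr; exact norm_sum_le _ _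
    _ ≤ s.card * ∑ i ∈ s, ‖f i‖ ^ 2 := sq_sum_le_card_mul_sum_sq

section Centroid

variable {d : ℕ}

theorem cost2_nonneg (P : Finset (EuclideanSpace ℝ (Fin d))) (c : EuclideanSpace ℝ (Fin d)) :
    0 ≤ Cost2 P c :=
  sum_nonneg fun _ _ => by positivity

theorem card_smul_cen (P : Finset (EuclideanSpace ℝ (Fin d))) :
    (P.card : ℝ) • Cen P = ∑ p ∈ P, p := by
  rcases P.eq_empty_or_nonempty with rfl | hP
  · simp
  · rw [Cen, smul_smul, mul_inv_cancel₀ (by positivity), one_smul]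

theorem sum_sub_eq_card_smul_cen_sub (P : Finset (EuclideanSpace ℝ (Fin d)))
    (c : EuclideanSpace ℝ (Fin d)) :
    ∑ p ∈ P, (p - c) = (P.card : ℝ) • (Cen P - c) := by
  rw [sum_sub_distrib, sum_const, smul_sub, card_smul_cen, Nat.cast_smul_eq_nsmul]

theorem sum_sub_cen (P : Finset (EuclideanSpace ℝ (Fin d))) : ∑ p ∈ P, (p - Cen P) = 0 := by
  rw [sum_sub_eq_card_smul_cen_sub, sub_self, smul_zero]

theorem cost2_union {A B : Finset (EuclideanSpace ℝ (Fin d))} (h : Disjoint A B)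
    (c : EuclideanSpace ℝ (Fin d)) : Cost2 (A ∪ B) c = Cost2 A c + Cost2 B c :=
  sum_union h

theorem card_mul_norm_cen_sub_sq_le_cost2 (P : Finset (EuclideanSpace ℝ (Fin d)))
    (c : EuclideanSpace ℝ (Fin d)) :
    (P.card : ℝ) ^ 2 * ‖Cen P - c‖ ^ 2 ≤ P.card * Cost2 P c := by
  have h := norm_sum_sq_le_card_mul_sum_norm_sq P (· - c)
  rwa [sum_sub_eq_card_smul_cen_sub, norm_smul, mul_pow, Real.norm_natCast] at h

theorem card_mul_card_mul_norm_cen_sub_cen_sq_le {X₁ X₂ : Finset (EuclideanSpace ℝ (Fin d))}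
    (hdisj : Disjoint X₁ X₂) (hX₁ : X₁.Nonempty) :
    (X₁.card : ℝ) * (X₁ ∪ X₂).card * ‖Cen (X₁ ∪ X₂) - Cen X₁‖ ^ 2 ≤
      X₂.card * Cost2 (X₁ ∪ X₂) (Cen (X₁ ∪ X₂)) := by
  set c := Cen (X₁ ∪ X₂)
  set m : ℝ := (X₁.card : ℝ)
  set k : ℝ := (X₂.card : ℝ)
  set D := ‖Cen X₁ - c‖ ^ 2
  have hm : 0 < m := Nat.cast_pos.mpr hX₁.card_pos
  have h₁ : m * D ≤ Cost2 X₁ c := by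
    refine le_of_mul_le_mul_left ?_ hm
    linarith [card_mul_norm_cen_sub_sq_le_cost2 X₁ c]
  have h₂ : m ^ 2 * D ≤ k * Cost2 X₂ c := by
    have hsum : ∑ p ∈ X₂, (p - c) = -(m • (Cen X₁ - c)) := by
      rw [eq_neg_iff_add_eq_zero, ← sum_sub_eq_card_smul_cen_sub, add_comm,
        ← sum_union hdisj, sum_sub_cen]
    have h := norm_sum_sq_le_card_mul_sum_norm_sq X₂ (· - c)
    rwa [hsum, norm_neg, norm_smul, mul_pow, Real.norm_of_nonneg hm.le] at h
  have hk : 0 ≤ k := by positivity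
  rw [card_union_of_disjoint hdisj, cost2_union hdisj, norm_sub_rev]
  push_cast
  linear_combination mul_le_mul_of_nonneg_left h₁ hk + h₂

end Centroid

theorem stmt13_general (d : ℕ) (lam : ℝ) (hlam1 : lam < 1)
    (X X₁ X₂ : Finset (EuclideanSpace ℝ (Fin d))) (n : ℕ) (hn : n = X.card)
    (hpart : X = X₁ ∪ X₂) (hdisj : Disjoint X₁ X₂) (hX₁ : X₁.Nonempty)
    (hcard : (1 - lam) * (n : ℝ) ≤ (X₁.card : ℝ)) :
    ‖Cen X - Cen X₁‖ ^ 2 ≤ (lam / ((1 - lam) * (n : ℝ))) * Cost2 X (Cen X) := by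
  subst hpart hn
  have hn : (0 : ℝ) < (X₁ ∪ X₂).card := Nat.cast_pos.mpr (hX₁.mono subset_union_left).card_pos
  have hsplit : ((X₁ ∪ X₂).card : ℝ) = X₁.card + X₂.card := by
    rw [card_union_of_disjoint hdisj, Nat.cast_add]
  rw [div_mul_eq_mul_div, le_div_iff₀ (mul_pos (sub_pos.mpr hlam1) hn)]
  refine le_of_mul_le_mul_left ?_ hn
  calc _ = (1 - lam) * (X₁ ∪ X₂).card * (X₁ ∪ X₂).card * ‖Cen (X₁ ∪ X₂) - Cen X₁‖ ^ 2 := by ring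
    _ ≤ X₁.card * (X₁ ∪ X₂).card * ‖Cen (X₁ ∪ X₂) - Cen X₁‖ ^ 2 := by gcongr
    _ ≤ X₂.card * Cost2 (X₁ ∪ X₂) (Cen (X₁ ∪ X₂)) :=
      card_mul_card_mul_norm_cen_sub_cen_sq_le hdisj hX₁
    _ ≤ lam * (X₁ ∪ X₂).card * Cost2 (X₁ ∪ X₂) (Cen (X₁ ∪ X₂)) := by
      gcongr
      · exact cost2_nonneg _ _
      · linarith
    _ = _ := by ring

theorem stmt13 (d : ℕ) (hd : 1 ≤ d) (lam : ℝ) (hlam0 : 0 < lam) (hlam1 : lam < 1)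
    (X X₁ X₂ : Finset (EuclideanSpace ℝ (Fin d))) (n : ℕ) (hn : n = X.card)
    (hpart : X = X₁ ∪ X₂) (hdisj : Disjoint X₁ X₂) (hX₁ : X₁.Nonempty)
    (hcard : (1 - lam) * (n : ℝ) ≤ (X₁.card : ℝ)) :
    ‖Cen X - Cen X₁‖ ^ 2 ≤ (lam / ((1 - lam) * (n : ℝ))) * Cost2 X (Cen X) :=
  stmt13_general d lam hlam1 X X₁ X₂ n hn hpart hdisj hX₁ hcard
end

section
/- Let d ≥ 1, let α ∈ [0, 1/2) and ε ∈ (0, 1). Let X̃ ⊆ ℝ^d be finite nonempty, let T ⊆ X̃ be nonempty with |T| ≥ (1 − α)·|X̃|, and let m ∈ ℝ^d be a geometric median of T. Let C be a finite nonempty set of points of ℝ^d containing some point q with ‖q − m‖₂ ≤ α·ε·Cost(T, m)/|T|. For each c ∈ C let N(c) ⊆ X̃ be a set of ⌈(1 − α)|X̃|⌉ points of X̃ closest to c, and let ĉ ∈ C minimize Cost(N(c), c) over c ∈ C. Then Cost(N(ĉ), ĉ) ≤ (1 + αε)·Cost(T, m). -/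
open Finset
open scoped Classical

theorem stmt19 (d : ℕ) (hd : 1 ≤ d) (α ε : ℝ)
    (hα0 : 0 ≤ α) (hα : α < 1/2) (hε0 : 0 < ε) (hε1 : ε < 1)
    (Xt : Finset (EuclideanSpace ℝ (Fin d))) (hXt : Xt.Nonempty)
    (T : Finset (EuclideanSpace ℝ (Fin d))) (hTsub : T ⊆ Xt) (hTne : T.Nonempty)
    (hTsize : (1 - α) * (Xt.card : ℝ) ≤ (T.card : ℝ))
    (m : EuclideanSpace ℝ (Fin d)) (hm : ∀ y, Cost T m ≤ Cost T y)
    (C : Finset (EuclideanSpace ℝ (Fin d))) (hC : C.Nonempty)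
    (q : EuclideanSpace ℝ (Fin d)) (hqC : q ∈ C)
    (hq : ‖q - m‖ ≤ α * ε * Cost T m / (T.card : ℝ))
    (N : EuclideanSpace ℝ (Fin d) → Finset (EuclideanSpace ℝ (Fin d)))
    (hNsub : ∀ c ∈ C, N c ⊆ Xt)
    (hNcard : ∀ c ∈ C, (N c).card = ⌈(1 - α) * (Xt.card : ℝ)⌉₊)
    (hNnear : ∀ c ∈ C, ∀ x ∈ N c, ∀ y ∈ Xt \ N c, ‖x - c‖ ≤ ‖y - c‖)
    (chat : EuclideanSpace ℝ (Fin d)) (hchatC : chat ∈ C)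
    (hchat : ∀ c ∈ C, Cost (N chat) chat ≤ Cost (N c) c) :
    Cost (N chat) chat ≤ (1 + α * ε) * Cost T m := by
  have hTpos : (0:ℝ) < T.card := by exact_mod_cast Finset.card_pos.mpr hTne
  have hk : ⌈(1 - α) * (Xt.card : ℝ)⌉₊ ≤ T.card := Nat.ceil_le.mpr hTsize
  have hk' : (N q).card ≤ T.card := by rw [hNcard q hqC]; exact hk
  obtain ⟨S, hST, hScard⟩ := Finset.exists_subset_card_eq hk'
  have hSsub : S ⊆ Xt := hST.trans hTsub
  -- exchange argument: Cost (N q) q ≤ Cost S q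
  have hNq : Cost (N q) q ≤ Cost S q := by
    have hcards : ((N q) \ S).card = (S \ (N q)).card := by
      have h1 := Finset.card_sdiff_add_card_inter (N q) S
      have h2 := Finset.card_sdiff_add_card_inter S (N q)
      rw [Finset.inter_comm] at h2
      omega
    have key : ∑ x ∈ (N q) \ S, ‖x - q‖ ≤ ∑ x ∈ S \ (N q), ‖x - q‖ := by
      rcases Finset.eq_empty_or_nonempty (S \ N q) with h | h
      · have : (N q) \ S = ∅ := Finset.card_eq_zero.mp (by rw [hcards, h]; simp)
        simp [this, h]
      · calc ∑ x ∈ (N q) \ S, ‖x - q‖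
            ≤ ∑ _x ∈ (N q) \ S, ((S \ N q).inf' h fun y => ‖y - q‖) := by
              apply Finset.sum_le_sum
              intro x hx
              apply Finset.le_inf'
              intro y hy
              exact hNnear q hqC x (Finset.mem_sdiff.mp hx).1 y
                (Finset.mem_sdiff.mpr ⟨hSsub (Finset.mem_sdiff.mp hy).1,
                  (Finset.mem_sdiff.mp hy).2⟩)
          _ = (((N q) \ S).card : ℝ) * ((S \ N q).inf' h fun y => ‖y - q‖) := by
              rw [Finset.sum_const, nsmul_eq_mul]
          _ = ((S \ (N q)).card : ℝ) * ((S \ N q).inf' h fun y => ‖y - q‖) := by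
              rw [hcards]
          _ ≤ ∑ x ∈ S \ (N q), ‖x - q‖ := by
              rw [← nsmul_eq_mul, ← Finset.sum_const]
              exact Finset.sum_le_sum fun x hx => Finset.inf'_le _ hx
    have hsplit1 : Cost (N q) q = ∑ x ∈ (N q) \ S, ‖x - q‖ + ∑ x ∈ (N q) ∩ S, ‖x - q‖ := by
      unfold Cost
      rw [← Finset.sum_union (Finset.disjoint_sdiff_inter _ _), Finset.sdiff_union_inter]
    have hsplit2 : Cost S q = ∑ x ∈ S \ (N q), ‖x - q‖ + ∑ x ∈ S ∩ (N q), ‖x - q‖ := by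
      unfold Cost
      rw [← Finset.sum_union (Finset.disjoint_sdiff_inter _ _), Finset.sdiff_union_inter]
    rw [hsplit1, hsplit2, Finset.inter_comm S (N q)]
    linarith
  have hSq : Cost S q ≤ Cost T q := by
    apply Finset.sum_le_sum_of_subset_of_nonneg hST
    intro i _ _; positivity
  have hTq : Cost T q ≤ Cost T m + (T.card : ℝ) * ‖q - m‖ := by
    unfold Cost
    calc ∑ p ∈ T, ‖p - q‖ ≤ ∑ p ∈ T, (‖p - m‖ + ‖m - q‖) := by
          apply Finset.sum_le_sum
          intro p _
          calc ‖p - q‖ = ‖(p - m) + (m - q)‖ := by rw [sub_add_sub_cancel]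
            _ ≤ ‖p - m‖ + ‖m - q‖ := norm_add_le _ _
      _ = ∑ p ∈ T, ‖p - m‖ + (T.card : ℝ) * ‖q - m‖ := by
          rw [Finset.sum_add_distrib, Finset.sum_const, nsmul_eq_mul, norm_sub_rev m q]
  have hbound : (T.card : ℝ) * ‖q - m‖ ≤ α * ε * Cost T m := by
    calc (T.card : ℝ) * ‖q - m‖ ≤ (T.card : ℝ) * (α * ε * Cost T m / (T.card : ℝ)) :=
          mul_le_mul_of_nonneg_left hq (le_of_lt hTpos)
      _ = α * ε * Cost T m := by field_simp
  calc Cost (N chat) chat ≤ Cost (N q) q := hchat q hqC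
    _ ≤ Cost S q := hNq
    _ ≤ Cost T q := hSq
    _ ≤ Cost T m + (T.card : ℝ) * ‖q - m‖ := hTq
    _ ≤ Cost T m + α * ε * Cost T m := by linarith
    _ = (1 + α * ε) * Cost T m := by ring
end
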